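/- arXiv:2304.09305 — 5 statements merged into one kernel-verified Lean document; each statement's English description precedes it below -/
import Mathlib

section
/- For any vector η ∈ ℝ^K, the Hessian of the multinomial log-partition function A(η) = log(1 + Σ_{k=1}^K e^{η_k}) has minimum eigenvalue at least (min_j e^{η_j}) / (1 + Σ_{l=1}^K e^{η_l})^2. -/
open Real Finset

/-!
Writing `p j = e^{η_j} / (1 + ∑ e^{η_l})`, the Hessian is `diag p - p pᵀ`, whose quadratic form is
`∑ p v² - (∑ p v)²`. By Cauchy–Schwarz `(∑ p v)² ≤ (∑ p)(∑ p v²)`, so the form is at least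
`(1 - ∑ p) ∑ p v² = (∑ p v²) / (1 + ∑ e^{η_l})`, and `∑ p v² ≥ min_j p_j` for a unit vector `v`.
-/

section WeightedSums

variable {ι : Type*} [Fintype ι]

theorem sum_sum_mul_diag_sub_outer_mul {R : Type*} [CommRing R] [DecidableEq ι] (p v : ι → R) :
    ∑ j, ∑ k, v j * (p j * ((if j = k then 1 else 0) - p k)) * v k =
      ∑ j, p j * v j ^ 2 - (∑ j, p j * v j) ^ 2 := by
  simp only [mul_sub, sub_mul, sum_sub_distrib, mul_ite, mul_one, mul_zero, ite_mul, zero_mul,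
    sum_ite_eq, mem_univ, if_true]
  rw [sq, sum_mul_sum]
  congr 1
  · exact sum_congr rfl fun j _ => by ring
  · exact sum_congr rfl fun j _ => sum_congr rfl fun k _ => by ring

theorem one_sub_sum_mul_le_sum_mul_sq_sub_sq {p : ι → ℝ} (hp : ∀ j, 0 ≤ p j) (v : ι → ℝ) :
    (1 - ∑ j, p j) * ∑ j, p j * v j ^ 2 ≤ ∑ j, p j * v j ^ 2 - (∑ j, p j * v j) ^ 2 := by
  have cauchy_schwarz : (∑ j, p j * v j) ^ 2 ≤ (∑ j, p j) * ∑ j, p j * v j ^ 2 :=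
    sum_sq_le_sum_mul_sum_of_sq_le_mul _ (fun j _ => hp j)
      (fun j _ => mul_nonneg (hp j) (sq_nonneg _)) (fun j _ => le_of_eq (by ring))
  linarith

theorem mul_sum_sq_le_sum_mul_sq {c : ℝ} {w : ι → ℝ} (hw : ∀ j, c ≤ w j) (v : ι → ℝ) :
    c * ∑ j, v j ^ 2 ≤ ∑ j, w j * v j ^ 2 := by
  rw [mul_sum]
  exact sum_le_sum fun j _ => mul_le_mul_of_nonneg_right (hw j) (sq_nonneg _)

theorem one_sub_sum_div_one_add_sum {s : ι → ℝ} (hs : ∀ j, 0 ≤ s j) :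
    1 - ∑ j, s j / (1 + ∑ l, s l) = 1 / (1 + ∑ l, s l) := by
  have : 0 < 1 + ∑ l, s l := by linarith [sum_nonneg fun l (_ : l ∈ univ) => hs l]
  rw [← sum_div]
  field_simp
  ring

end WeightedSums

/-- Minimum-eigenvalue lower bound for the Hessian of the multinomial
log-partition function `A(η) = log(1 + ∑ e^{η_k})`: for every unit vector `v`,
`vᵀ ∇²A(η) v ≥ (min_j e^{η_j}) / (1 + ∑_l e^{η_l})²`. -/
theorem hessian_logpartition_min_eigenvalue
    (K : ℕ) (hK : 0 < K) (η : Fin K → ℝ)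
    (H : Matrix (Fin K) (Fin K) ℝ)
    (hH : ∀ j k, H j k = (Real.exp (η j) / (1 + ∑ l, Real.exp (η l))) *
      ((if j = k then (1 : ℝ) else 0) - Real.exp (η k) / (1 + ∑ l, Real.exp (η l))))
    (v : Fin K → ℝ) (hv : ∑ j, v j ^ 2 = 1) :
    (Finset.univ.inf' (Finset.univ_nonempty_iff.mpr ⟨⟨0, hK⟩⟩) fun j => Real.exp (η j)) /
      (1 + ∑ l, Real.exp (η l)) ^ 2 ≤ ∑ j, ∑ k, v j * H j k * v k := by
  set S := 1 + ∑ l, exp (η l)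
  set m := univ.inf' (univ_nonempty_iff.mpr ⟨⟨0, hK⟩⟩) fun j => exp (η j)
  set p : Fin K → ℝ := fun j => exp (η j) / S
  have hS : 0 < S := by positivity
  have hp : ∀ j, 0 ≤ p j := fun j => by positivity
  have hform : ∑ j, ∑ k, v j * H j k * v k = ∑ j, p j * v j ^ 2 - (∑ j, p j * v j) ^ 2 := by
    simp_rw [hH]
    exact sum_sum_mul_diag_sub_outer_mul p v
  have hmin : m / S ≤ ∑ j, p j * v j ^ 2 := by
    simpa only [hv, mul_one] using mul_sum_sq_le_sum_mul_sq
      (fun j => div_le_div_of_nonneg_right (inf'_le _ (mem_univ j)) hS.le) v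
  calc m / S ^ 2 = 1 / S * (m / S) := by field_simp
    _ ≤ (1 - ∑ j, p j) * ∑ j, p j * v j ^ 2 := by
      rw [one_sub_sum_div_one_add_sum fun j => (exp_pos (η j)).le]
      gcongr
    _ ≤ _ := one_sub_sum_mul_le_sum_mul_sq_sub_sq hp v
    _ = _ := hform.symm
end

section
/- For any vector η ∈ ℝ^K, the Hessian of A(η) = log(1 + Σ_{k=1}^K e^{η_k}) has maximum eigenvalue at most 1. -/
/-!
With `p_j = e^{η_j} / (1 + ∑ e^{η_l})`, the quadratic form of the Hessian is
`∑ p_j v_j² - (∑ p_j v_j)²`, the variance of `v` (extended by `v_0 = 0` on the baseline class,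
which has weight `1 - ∑ p_j`) under the softmax distribution. Dropping the subtracted square and
using `p_j ≤ 1` bounds it by `∑ v_j² = 1`.
-/

open Real Finset

section DiagSubOuter

variable {ι : Type*} [Fintype ι] [DecidableEq ι] (p v : ι → ℝ)

theorem sum_sum_mul_diag_sub_outer :
    ∑ j, ∑ k, v j * (p j * ((if j = k then 1 else 0) - p k)) * v k
      = ∑ j, p j * v j ^ 2 - (∑ j, p j * v j) ^ 2 := by
  have hterm : ∀ j k, v j * (p j * ((if j = k then 1 else 0) - p k)) * v k
      = (if j = k then p j * v j ^ 2 else 0) - p j * v j * (p k * v k) := by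
    intro j k
    split_ifs with hjk
    · subst hjk; ring
    · ring
  simp only [hterm, sum_sub_distrib, sum_ite_eq, mem_univ, if_true, sq (∑ j, p j * v j),
    sum_mul_sum]

theorem sum_sum_mul_diag_sub_outer_le {p : ι → ℝ} (hp : ∀ j, p j ≤ 1) :
    ∑ j, ∑ k, v j * (p j * ((if j = k then 1 else 0) - p k)) * v k ≤ ∑ j, v j ^ 2 := by
  rw [sum_sum_mul_diag_sub_outer]
  have hweighted : ∑ j, p j * v j ^ 2 ≤ ∑ j, v j ^ 2 :=
    sum_le_sum fun j _ => mul_le_of_le_one_left (sq_nonneg _) (hp j)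
  linarith [sq_nonneg (∑ j, p j * v j)]

end DiagSubOuter

theorem exp_div_one_add_sum_exp_le_one {ι : Type*} [Fintype ι] (η : ι → ℝ) (j : ι) :
    exp (η j) / (1 + ∑ l, exp (η l)) ≤ 1 := by
  have hsum : exp (η j) ≤ ∑ l, exp (η l) :=
    single_le_sum (fun l _ => (exp_pos (η l)).le) (mem_univ j)
  rw [div_le_one (by positivity)]
  linarith

/-- Maximum-eigenvalue upper bound for the Hessian of
`A(η) = log(1 + ∑ e^{η_k})`: for every unit vector `v`, `vᵀ ∇²A(η) v ≤ 1`. -/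
theorem hessian_logpartition_max_eigenvalue
    (K : ℕ) (η : Fin K → ℝ)
    (H : Matrix (Fin K) (Fin K) ℝ)
    (hH : ∀ j k, H j k = (Real.exp (η j) / (1 + ∑ l, Real.exp (η l))) *
      ((if j = k then (1 : ℝ) else 0) - Real.exp (η k) / (1 + ∑ l, Real.exp (η l))))
    (v : Fin K → ℝ) (hv : ∑ j, v j ^ 2 = 1) :
    ∑ j, ∑ k, v j * H j k * v k ≤ 1 := by
  simp only [hH]
  exact hv ▸ sum_sum_mul_diag_sub_outer_le v (exp_div_one_add_sum_exp_le_one η)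
end

section
/- Let f : ℝ^K → ℝ^K be defined by f(u)_k = u_k + c_k − log(1 + Σ_{j=1}^K e^{u_j}) for constants c_k, so that ∇f(u) = I_K − 1_K ∇A(u)ᵀ where A(u) = log(1 + Σ_j e^{u_j}). Then for any v ∈ ℝ^K, the minimum eigenvalue of ∇f(v)ᵀ∇f(v) is at least (1 + √K (Σ_{j=1}^K e^{2 v_j})^{1/2})^{-2}. -/
/-!
Write `w = ∇f(v) z = z - s • 1` with `s = ⟪p, z⟫`. Since `p = e^v / (1 + ∑ e^{v_l})`, one
finds `s = ⟪e^v, w⟫`, so `z = w + ⟪e^v, w⟫ • 1`. The triangle and Cauchy–Schwarz inequalities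
then give `‖z‖ ≤ (1 + ‖1‖ ‖e^v‖) ‖w‖ = (1 + √K (∑ e^{2 v_j})^{1/2}) ‖w‖`.
-/

open Real Finset
open scoped RealInnerProductSpace

lemma sum_mul_sub_sum_mul_eq {ι : Type*} [Fintype ι] (q p z : ι → ℝ)
    (hp : ∀ k, p k * (1 + ∑ l, q l) = q k) :
    ∑ k, q k * (z k - ∑ j, p j * z j) = ∑ j, p j * z j := by
  have hqz : ∑ k, q k * z k = (∑ j, p j * z j) * (1 + ∑ l, q l) := by
    rw [sum_mul]
    exact sum_congr rfl fun k _ => by rw [← hp k]; ring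
  simp only [mul_sub, sum_sub_distrib, ← sum_mul, hqz]
  ring

section InnerProductSpace

variable {E : Type*} [NormedAddCommGroup E] [InnerProductSpace ℝ E] {z w u e : E}

lemma norm_le_of_eq_add_inner_smul (h : z = w + ⟪e, w⟫ • u) :
    ‖z‖ ≤ (1 + ‖u‖ * ‖e‖) * ‖w‖ :=
  calc ‖z‖ ≤ ‖w‖ + |⟪e, w⟫| * ‖u‖ := by
        rw [h, ← Real.norm_eq_abs, ← norm_smul]
        exact norm_add_le _ _
    _ ≤ ‖w‖ + ‖e‖ * ‖w‖ * ‖u‖ := by gcongr; exact abs_real_inner_le_norm e w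
    _ = (1 + ‖u‖ * ‖e‖) * ‖w‖ := by ring

lemma inv_sq_mul_norm_sq_le_of_eq_add_inner_smul (h : z = w + ⟪e, w⟫ • u) :
    ((1 + ‖u‖ * ‖e‖)⁻¹) ^ 2 * ‖z‖ ^ 2 ≤ ‖w‖ ^ 2 := by
  rw [← mul_pow]
  gcongr
  rw [inv_mul_le_iff₀ (by positivity)]
  exact norm_le_of_eq_add_inner_smul h

end InnerProductSpace

/-- With `∇f(v) = I_K − 1_K ∇A(v)ᵀ` for `A(v) = log(1 + ∑ e^{v_j})`, the
minimum eigenvalue of `∇f(v)ᵀ∇f(v)` is at least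
`(1 + √K (∑_j e^{2 v_j})^{1/2})⁻²`, i.e. `‖∇f(v) z‖² ≥ bound · ‖z‖²` for all `z`. -/
theorem grad_f_gram_min_eigenvalue
    (K : ℕ) (v : Fin K → ℝ)
    (p : Fin K → ℝ) (hp : ∀ j, p j = Real.exp (v j) / (1 + ∑ l, Real.exp (v l)))
    (M : Matrix (Fin K) (Fin K) ℝ)
    (hM : ∀ j k, M j k = (if j = k then (1 : ℝ) else 0) - p k)
    (z : Fin K → ℝ) :
    ((1 + Real.sqrt K * Real.sqrt (∑ j, Real.exp (2 * v j)))⁻¹) ^ 2 * ∑ j, z j ^ 2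
      ≤ ∑ j, (∑ k, M j k * z k) ^ 2 := by
  set s := ∑ k, p k * z k
  have hMz : ∀ j, ∑ k, M j k * z k = z j - s := fun j => by
    simp only [hM, sub_mul, ite_mul, one_mul, zero_mul, sum_sub_distrib, sum_ite_eq, mem_univ,
      if_true, s]
  have hs : ∑ k, exp (v k) * (z k - s) = s :=
    sum_mul_sub_sum_mul_eq _ p z fun k => by rw [hp]; field_simp
  have hz : (WithLp.toLp 2 z : EuclideanSpace ℝ (Fin K)) = WithLp.toLp 2 (fun j => z j - s) +
      ⟪WithLp.toLp 2 fun j => exp (v j), WithLp.toLp 2 fun j => z j - s⟫ •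
        WithLp.toLp 2 fun _ => 1 := by
    ext j
    simp [PiLp.inner_apply, mul_comm, hs]
  have key := inv_sq_mul_norm_sq_le_of_eq_add_inner_smul hz
  rw [EuclideanSpace.real_norm_sq_eq, EuclideanSpace.real_norm_sq_eq] at key
  simpa [EuclideanSpace.norm_eq, ← exp_nat_mul, hMz] using key
end

section
/- Ordinal link lower bound: define, for u ∈ ℝ^K with u_j < 0 for j > 1, p_j(u) = (1+e^{Σ_{l≤j+1} u_l})^{-1} − (1+e^{Σ_{l≤j} u_l})^{-1} for 1 ≤ j < K and p_K(u) = 1 − (1+e^{Σ_{l≤K} u_l})^{-1}. Then p_K(u) ≥ (1+e^{‖u‖₁})^{-1} and for 1 ≤ j < K, p_j(u) ≥ (−max_{k>1} u_k) · e^{‖u‖₁}/(1+e^{‖u‖₁})². -/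
/-!
Both sides are values of the logistic function `σ = Real.sigmoid`: `(1 + eᵗ)⁻¹ = σ(-t)`,
`1 - (1 + eᵗ)⁻¹ = σ(t)` and `eᵗ / (1 + eᵗ)² = σ'(t) = (2 (1 + cosh t))⁻¹`. Every partial sum
`s(m)` with `m ≤ K` lies in `[-‖u‖₁, ‖u‖₁]`, so the first bound is monotonicity of `σ`. For the
second, `p_j(u) = σ(-s(j+1)) - σ(-s(j))` with `-s(j+1) - (-s(j)) = -u_{j+1} ≥ -max_{k>1} u_k ≥ 0`,
and by the mean value theorem this increment is at least `-u_{j+1}` times the minimum of `σ'`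
on `[-‖u‖₁, ‖u‖₁]`, which is attained at the endpoints because `cosh` increases with `|t|`.
-/

open Real Finset

namespace Real

lemma inv_one_add_exp_eq_sigmoid_neg (t : ℝ) : (1 + exp t)⁻¹ = sigmoid (-t) := by
  rw [sigmoid_def, neg_neg]

lemma one_sub_inv_one_add_exp (t : ℝ) : 1 - (1 + exp t)⁻¹ = sigmoid t := by
  rw [inv_one_add_exp_eq_sigmoid_neg, sigmoid_neg, sub_sub_cancel]

lemma exp_div_one_add_exp_sq (t : ℝ) : exp t / (1 + exp t) ^ 2 = sigmoid t * (1 - sigmoid t) := by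
  rw [← sigmoid_neg, sigmoid_def, sigmoid_def, neg_neg, exp_neg]
  field_simp
  ring

lemma sigmoid_mul_one_sub_sigmoid (t : ℝ) : sigmoid t * (1 - sigmoid t) = (2 * (1 + cosh t))⁻¹ := by
  rw [← sigmoid_neg, sigmoid_def, sigmoid_def, neg_neg, ← mul_inv, cosh_eq]
  congr 1
  rw [add_mul, one_mul, mul_add, mul_one, ← exp_add, neg_add_cancel, exp_zero]
  ring

lemma sigmoid_mul_one_sub_sigmoid_le_of_abs_le {x y : ℝ} (h : |x| ≤ |y|) :
    sigmoid y * (1 - sigmoid y) ≤ sigmoid x * (1 - sigmoid x) := by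
  rw [sigmoid_mul_one_sub_sigmoid, sigmoid_mul_one_sub_sigmoid]
  have : 0 < 1 + cosh x := by linarith [one_le_cosh x]
  gcongr
  exact cosh_le_cosh.2 h

lemma mul_sub_le_sigmoid_sub {n x y : ℝ} (hx : |x| ≤ n) (hy : |y| ≤ n) (hxy : x ≤ y) :
    sigmoid n * (1 - sigmoid n) * (y - x) ≤ sigmoid y - sigmoid x := by
  refine (convex_Icc (-n) n).mul_sub_le_image_sub_of_le_deriv continuous_sigmoid.continuousOn
    differentiable_sigmoid.differentiableOn (fun t ht => ?_) x (abs_le.1 hx) y (abs_le.1 hy) hxy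
  rw [interior_Icc] at ht
  have hn : |t| ≤ |n| := by
    rw [abs_of_nonneg ((abs_nonneg x).trans hx)]
    exact abs_le.2 ⟨ht.1.le, ht.2.le⟩
  rw [deriv_sigmoid]
  exact sigmoid_mul_one_sub_sigmoid_le_of_abs_le hn

end Real

/-- Ordinal link lower bound. With 1-based indexing, partial sums
`s(m) = ∑_{l=1}^m u_l` and `‖u‖₁ = ∑_{l=1}^K |u_l|`, if `u_j < 0` for
`2 ≤ j ≤ K`, then `p_K(u) = 1 − (1+e^{s(K)})⁻¹ ≥ (1+e^{‖u‖₁})⁻¹` and for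
`1 ≤ j < K`,
`p_j(u) = (1+e^{s(j+1)})⁻¹ − (1+e^{s(j)})⁻¹ ≥ (−max_{k>1} u_k) e^{‖u‖₁}/(1+e^{‖u‖₁})²`. -/
theorem ordinal_link_lower_bound
    (K : ℕ) (hK : 2 ≤ K) (u : ℕ → ℝ)
    (hneg : ∀ j, 2 ≤ j → j ≤ K → u j < 0)
    (s : ℕ → ℝ) (hs : ∀ m, s m = ∑ l ∈ Finset.Icc 1 m, u l)
    (n1 : ℝ) (hn1 : n1 = ∑ l ∈ Finset.Icc 1 K, |u l|) :
    ((1 + Real.exp n1)⁻¹ ≤ 1 - (1 + Real.exp (s K))⁻¹) ∧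
    ∀ j, 1 ≤ j → j < K →
      (-(Finset.Icc 2 K).sup' (Finset.nonempty_Icc.mpr hK) u) *
          Real.exp n1 / (1 + Real.exp n1) ^ 2
        ≤ (1 + Real.exp (s (j + 1)))⁻¹ - (1 + Real.exp (s j))⁻¹ := by
  have hbound : ∀ m ≤ K, |s m| ≤ n1 := fun m hm => by
    rw [hs, hn1]
    exact (abs_sum_le_sum_abs _ _).trans
      (sum_le_sum_of_subset_of_nonneg (Icc_subset_Icc_right hm) fun _ _ _ => abs_nonneg _)
  rw [one_sub_inv_one_add_exp]
  simp only [inv_one_add_exp_eq_sigmoid_neg]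
  refine ⟨sigmoid_le (abs_le.1 (hbound K le_rfl)).1, fun j hj hjK => ?_⟩
  have hj1 : j + 1 ∈ Icc 2 K := mem_Icc.2 ⟨by omega, hjK⟩
  have hstep : s (j + 1) = s j + u (j + 1) := by
    rw [hs, hs, sum_Icc_succ_top (by omega)]
  have hu : u (j + 1) ≤ (Icc 2 K).sup' (nonempty_Icc.mpr hK) u := le_sup' u hj1
  have hu0 : u (j + 1) < 0 := hneg (j + 1) (by omega) hjK
  calc (-(Icc 2 K).sup' (nonempty_Icc.mpr hK) u) * exp n1 / (1 + exp n1) ^ 2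
      = sigmoid n1 * (1 - sigmoid n1) * (-(Icc 2 K).sup' (nonempty_Icc.mpr hK) u) := by
        rw [mul_div_assoc, exp_div_one_add_exp_sq, mul_comm]
    _ ≤ sigmoid n1 * (1 - sigmoid n1) * (-s (j + 1) - -s j) := by
        gcongr
        · exact mul_nonneg (sigmoid_nonneg n1) (sub_nonneg.2 (sigmoid_le_one n1))
        · linarith
    _ ≤ sigmoid (-s (j + 1)) - sigmoid (-s j) :=
        mul_sub_le_sigmoid_sub (by rw [abs_neg]; exact hbound j hjK.le)
          (by rw [abs_neg]; exact hbound (j + 1) hjK) (by linarith)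
end

section
/- Lower-triangular cumulative-sum bound: for real numbers α_1,…,α_K > 0, p_1,…,p_K > 0, and any v ∈ ℝ^K, set ṽ_k = Σ_{j=1}^k v_j and w_j = (α_j ṽ_j − α_{j+1} ṽ_{j+1})/p_j for j < K, w_K = α_K ṽ_K / p_K (with α_{K+1}=0). If p_j ≤ 1 for all j, then ‖w‖₂² ≥ (1/K) Σ_{k=1}^K α_k² ṽ_k², and hence ‖w‖₂² ≥ (min_k α_k²/(4K)) ‖v‖₂². -/
/-!
Since `α_{K+1} = 0`, the sum `∑_{j ≥ k} w_j p_j` telescopes to `α_k ṽ_k`, so Cauchy–Schwarz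
with `∑_{j ≥ k} p_j² ≤ 1` gives `α_k² ṽ_k² ≤ ‖w‖²` for every `k`; averaging over `k` gives the
first bound. The second follows from `α_k² ≥ min α²` and `‖v‖² ≤ 4 ∑_k ṽ_k²`, which holds
because `v_j = ṽ_j − ṽ_{j−1}`.
-/

open Finset

lemma sq_sum_mul_le_sum_sq_of_sum_sq_le_one {ι : Type*} (s : Finset ι) (w p : ι → ℝ)
    (hp : ∑ i ∈ s, p i ^ 2 ≤ 1) : (∑ i ∈ s, w i * p i) ^ 2 ≤ ∑ i ∈ s, w i ^ 2 :=
  (sum_mul_sq_le_sq_mul_sq s w p).trans <|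
    mul_le_of_le_one_right (sum_nonneg fun _ _ => sq_nonneg _) hp

lemma sum_Icc_sub_succ (f : ℕ → ℝ) {k K : ℕ} (hk : k ≤ K + 1) :
    ∑ j ∈ Icc k K, (f j - f (j + 1)) = f k - f (K + 1) := by
  rw [← Ico_add_one_right_eq_Icc, ← neg_sub, ← sum_Ico_sub f hk, ← sum_neg_distrib]
  simp only [neg_sub]

lemma sq_le_sum_sq_of_mul_eq_sub_succ (a w p : ℕ → ℝ) {k K : ℕ} (hk : k ≤ K + 1)
    (ha : a (K + 1) = 0) (hw : ∀ j ∈ Icc k K, w j * p j = a j - a (j + 1))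
    (hp : ∑ j ∈ Icc k K, p j ^ 2 ≤ 1) : a k ^ 2 ≤ ∑ j ∈ Icc k K, w j ^ 2 := by
  have htel : ∑ j ∈ Icc k K, w j * p j = a k := by
    rw [sum_congr rfl hw, sum_Icc_sub_succ a hk, ha, sub_zero]
  exact htel ▸ sq_sum_mul_le_sum_sq_of_sum_sq_le_one _ w p hp

/-- The extra term `2 ṽ_K²` makes the induction go through: it absorbs
`v_{K+1}² ≤ 2 ṽ_{K+1}² + 2 ṽ_K²`. -/
lemma sum_sq_add_two_mul_sq_sum_le (v : ℕ → ℝ) (K : ℕ) :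
    ∑ j ∈ Icc 1 K, v j ^ 2 + 2 * (∑ j ∈ Icc 1 K, v j) ^ 2
      ≤ 4 * ∑ k ∈ Icc 1 K, (∑ j ∈ Icc 1 k, v j) ^ 2 := by
  induction K with
  | zero => simp
  | succ K ih =>
    simp only [sum_Icc_succ_top (Nat.le_add_left 1 K)]
    nlinarith [sq_nonneg (2 * ∑ j ∈ Icc 1 K, v j + v (K + 1))]

lemma sum_sq_le_four_mul_sum_sq_partialSum (v : ℕ → ℝ) (K : ℕ) :
    ∑ j ∈ Icc 1 K, v j ^ 2 ≤ 4 * ∑ k ∈ Icc 1 K, (∑ j ∈ Icc 1 k, v j) ^ 2 := by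
  nlinarith [sum_sq_add_two_mul_sq_sum_le v K, sq_nonneg (∑ j ∈ Icc 1 K, v j)]

theorem cumulative_sum_lower_bound_general
    (K : ℕ) (hK : 1 ≤ K) (v α p : ℕ → ℝ)
    (hα0 : α (K + 1) = 0)
    (hp : ∀ j ∈ Finset.Icc 1 K, 0 < p j)
    (hpsum : ∀ k ∈ Finset.Icc 1 K, ∑ j ∈ Finset.Icc k K, p j ^ 2 ≤ 1)
    (vt w : ℕ → ℝ)
    (hvt : ∀ k, vt k = ∑ j ∈ Finset.Icc 1 k, v j)
    (hw : ∀ j ∈ Finset.Icc 1 K, w j = (α j * vt j - α (j + 1) * vt (j + 1)) / p j) :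
    ((1 / (K : ℝ)) * ∑ k ∈ Finset.Icc 1 K, α k ^ 2 * vt k ^ 2
        ≤ ∑ j ∈ Finset.Icc 1 K, w j ^ 2) ∧
    (((Finset.Icc 1 K).inf' (Finset.nonempty_Icc.mpr hK) fun k => α k ^ 2) / (4 * K) *
        ∑ j ∈ Finset.Icc 1 K, v j ^ 2
      ≤ ∑ j ∈ Finset.Icc 1 K, w j ^ 2) := by
  set S := ∑ j ∈ Icc 1 K, w j ^ 2
  have hterm : ∀ k ∈ Icc 1 K, α k ^ 2 * vt k ^ 2 ≤ S := fun k hk => by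
    have hk := mem_Icc.mp hk
    have hwp : ∀ j ∈ Icc k K, w j * p j = α j * vt j - α (j + 1) * vt (j + 1) := fun j hj => by
      have hj := Icc_subset_Icc_left hk.1 hj
      rw [hw j hj, div_mul_cancel₀ _ (hp j hj).ne']
    calc α k ^ 2 * vt k ^ 2 = (α k * vt k) ^ 2 := by ring
      _ ≤ ∑ j ∈ Icc k K, w j ^ 2 := sq_le_sum_sq_of_mul_eq_sub_succ (fun j => α j * vt j) w p
          (by omega) (by simp [hα0]) hwp (hpsum k (mem_Icc.mpr hk))
      _ ≤ S := sum_le_sum_of_subset_of_nonneg (Icc_subset_Icc_left hk.1)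
          fun _ _ _ => sq_nonneg _
  have hmean : 1 / (K : ℝ) * ∑ k ∈ Icc 1 K, α k ^ 2 * vt k ^ 2 ≤ S := by
    have := expect_le (nonempty_Icc.mpr hK) hterm
    rwa [expect_eq_sum_div_card, Nat.card_Icc, Nat.add_sub_cancel, div_eq_inv_mul,
      ← one_div] at this
  refine ⟨hmean, le_trans ?_ hmean⟩
  set m := (Icc 1 K).inf' (nonempty_Icc.mpr hK) fun k => α k ^ 2
  have hm : 0 ≤ m := le_inf' _ _ fun k _ => sq_nonneg (α k)
  have hmin : m * ∑ k ∈ Icc 1 K, vt k ^ 2 ≤ ∑ k ∈ Icc 1 K, α k ^ 2 * vt k ^ 2 := by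
    rw [mul_sum]
    exact sum_le_sum fun k hk => mul_le_mul_of_nonneg_right (inf'_le _ hk) (sq_nonneg _)
  have hv := sum_sq_le_four_mul_sum_sq_partialSum v K
  simp only [← hvt] at hv
  calc m / (4 * K) * ∑ j ∈ Icc 1 K, v j ^ 2
      ≤ m / (4 * K) * (4 * ∑ k ∈ Icc 1 K, vt k ^ 2) := by gcongr
    _ = 1 / K * (m * ∑ k ∈ Icc 1 K, vt k ^ 2) := by field_simp
    _ ≤ 1 / K * ∑ k ∈ Icc 1 K, α k ^ 2 * vt k ^ 2 := by gcongr

/-- Lower-triangular cumulative-sum bound. With 1-based indexing, partial sums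
`ṽ_k = ∑_{j=1}^k v_j`, `α_{K+1} = 0`, and
`w_j = (α_j ṽ_j − α_{j+1} ṽ_{j+1})/p_j` for `1 ≤ j ≤ K` (so `w_K = α_K ṽ_K/p_K`),
if `α_j, p_j > 0`, `p_j ≤ 1`, and `∑_{j=k}^K p_j² ≤ 1` for all `k`, then
`‖w‖₂² ≥ (1/K) ∑_k α_k² ṽ_k²` and `‖w‖₂² ≥ (min_k α_k²/(4K)) ‖v‖₂²`. -/
theorem cumulative_sum_lower_bound
    (K : ℕ) (hK : 1 ≤ K) (v α p : ℕ → ℝ)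
    (hα : ∀ j ∈ Finset.Icc 1 K, 0 < α j) (hα0 : α (K + 1) = 0)
    (hp : ∀ j ∈ Finset.Icc 1 K, 0 < p j)
    (hp1 : ∀ j ∈ Finset.Icc 1 K, p j ≤ 1)
    (hpsum : ∀ k ∈ Finset.Icc 1 K, ∑ j ∈ Finset.Icc k K, p j ^ 2 ≤ 1)
    (vt w : ℕ → ℝ)
    (hvt : ∀ k, vt k = ∑ j ∈ Finset.Icc 1 k, v j)
    (hw : ∀ j ∈ Finset.Icc 1 K, w j = (α j * vt j - α (j + 1) * vt (j + 1)) / p j) :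
    ((1 / (K : ℝ)) * ∑ k ∈ Finset.Icc 1 K, α k ^ 2 * vt k ^ 2
        ≤ ∑ j ∈ Finset.Icc 1 K, w j ^ 2) ∧
    (((Finset.Icc 1 K).inf' (Finset.nonempty_Icc.mpr hK) fun k => α k ^ 2) / (4 * K) *
        ∑ j ∈ Finset.Icc 1 K, v j ^ 2
      ≤ ∑ j ∈ Finset.Icc 1 K, w j ^ 2) :=
  cumulative_sum_lower_bound_general K hK v α p hα0 hp hpsum vt w hvt hw
end
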